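/- arXiv:2504.03405 — 5 statements merged into one kernel-verified Lean document; each statement's English description precedes it below -/
import Mathlib

section
/- Let F : ℝ^J → ℝ be convex and differentiable, let A ⊆ ℝ^J be closed and convex, let λ > 0, and given w^{(t)} ∈ A define w^{(t+1)} = Proj_A(w^{(t)} - λ·∇F(w^{(t)})). Then for every w* ∈ A: F(w^{(t)}) - F(w*) ≤ (1/(2λ))·(‖w^{(t)} - w*‖² - ‖w^{(t+1)} - w*‖²) + (λ/2)·‖∇F(w^{(t)})‖². -/
open Set

local notation "⟪" x ", " y "⟫" => @inner ℝ _ _ x y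

/-- Gradient inequality for convex differentiable functions. -/
lemma grad_ineq {J : ℕ} {F : EuclideanSpace ℝ (Fin J) → ℝ}
    (hconv : ConvexOn ℝ Set.univ F) (hdiff : Differentiable ℝ F)
    (x y : EuclideanSpace ℝ (Fin J)) :
    F x - F y ≤ ⟪gradient F x, x - y⟫ := by
  set v : EuclideanSpace ℝ (Fin J) := y - x with hv
  set g : ℝ → ℝ := fun t => F (x + t • v) with hg
  have hgconv : ConvexOn ℝ Set.univ g := by
    have h := hconv.comp_affineMap
      (AffineMap.lineMap x y : ℝ →ᵃ[ℝ] EuclideanSpace ℝ (Fin J))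
    have heq : F ∘ (AffineMap.lineMap x y : ℝ →ᵃ[ℝ] EuclideanSpace ℝ (Fin J)) = g := by
      funext t
      show F (AffineMap.lineMap x y t) = F (x + t • v)
      congr 1
      rw [AffineMap.lineMap_apply, hv, vsub_eq_sub, vadd_eq_add]
      abel
    simpa [heq] using h
  have hderiv : HasDerivAt g ⟪gradient F x, v⟫ 0 := by
    have hc : HasDerivAt (fun t : ℝ => x + t • v) v 0 := by
      simpa using ((hasDerivAt_id (0:ℝ)).smul_const v).const_add x
    have hF : HasFDerivAt F (InnerProductSpace.toDual ℝ _ (gradient F x)) (x + (0:ℝ) • v) := by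
      simpa using ((hdiff x).hasGradientAt).hasFDerivAt
    have := hF.comp_hasDerivAt 0 hc
    simpa [hg, Function.comp_def] using this
  have hslope := hgconv.le_slope_of_hasDerivAt (mem_univ (0:ℝ)) (mem_univ (1:ℝ))
    one_pos hderiv
  have hsl : slope g 0 1 = F y - F x := by
    simp [slope_def_field, hg, hv]
  rw [hsl] at hslope
  have : ⟪gradient F x, v⟫ ≤ F y - F x := hslope
  have h2 : ⟪gradient F x, x - y⟫ = -⟪gradient F x, v⟫ := by
    rw [hv]; rw [← inner_neg_right]; congr 1; abel
  linarith [this, h2.ge, h2.le]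

/-- One step of projected gradient descent on a convex differentiable function. -/
theorem stmt_2 (J : ℕ) (F : EuclideanSpace ℝ (Fin J) → ℝ)
    (hconv : ConvexOn ℝ Set.univ F) (hdiff : Differentiable ℝ F)
    (A : Set (EuclideanSpace ℝ (Fin J))) (hAcl : IsClosed A) (hAconv : Convex ℝ A)
    (hAne : A.Nonempty)
    (proj : EuclideanSpace ℝ (Fin J) → EuclideanSpace ℝ (Fin J))
    (hproj : ∀ x, proj x ∈ A ∧ ∀ z ∈ A, ‖x - proj x‖ ≤ ‖x - z‖)
    (lam : ℝ) (hlam : 0 < lam)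
    (wt wt1 : EuclideanSpace ℝ (Fin J)) (hwt : wt ∈ A)
    (hstep : wt1 = proj (wt - lam • gradient F wt)) :
    ∀ ws ∈ A,
      F wt - F ws ≤
        (1 / (2 * lam)) * (‖wt - ws‖ ^ 2 - ‖wt1 - ws‖ ^ 2)
          + (lam / 2) * ‖gradient F wt‖ ^ 2 := by
  intro ws hws
  set g := gradient F wt with hgdef
  set x := wt - lam • g with hx
  have hp := hproj x
  have hpA : proj x ∈ A := hp.1
  -- obtuse angle property
  have hinf : ‖x - proj x‖ = ⨅ w : A, ‖x - w‖ := by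
    haveI : Nonempty A := hAne.to_subtype
    refine le_antisymm ?_ ?_
    · exact le_ciInf fun w => hp.2 w w.2
    · exact ciInf_le ⟨0, fun _ ⟨w, hw⟩ => hw ▸ norm_nonneg _⟩ (⟨proj x, hpA⟩ : A)
  have hobt : ∀ z ∈ A, ⟪x - proj x, z - proj x⟫ ≤ 0 :=
    (norm_eq_iInf_iff_real_inner_le_zero hAconv hpA).mp hinf
  -- contraction: ‖wt1 - ws‖ ≤ ‖x - ws‖
  have hcontr : ‖wt1 - ws‖ ^ 2 ≤ ‖x - ws‖ ^ 2 := by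
    have h1 : x - ws = (x - proj x) + (proj x - ws) := by abel
    have h2 : ‖x - ws‖ ^ 2 = ‖x - proj x‖ ^ 2 + 2 * ⟪x - proj x, proj x - ws⟫
        + ‖proj x - ws‖ ^ 2 := by
      rw [h1, @norm_add_sq_real]
    have h3 : ⟪x - proj x, proj x - ws⟫ = -⟪x - proj x, ws - proj x⟫ := by
      rw [← inner_neg_right]; congr 1; abel
    have h4 := hobt ws hws
    rw [hstep]
    nlinarith [sq_nonneg ‖x - proj x‖, norm_nonneg (x - proj x)]
  -- expand ‖x - ws‖²
  have hexp : ‖x - ws‖ ^ 2 = ‖wt - ws‖ ^ 2 - 2 * lam * ⟪g, wt - ws⟫ + lam ^ 2 * ‖g‖ ^ 2 := by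
    have h1 : x - ws = (wt - ws) - lam • g := by rw [hx]; abel
    rw [h1, @norm_sub_sq_real, real_inner_smul_right, norm_smul, Real.norm_eq_abs,
      abs_of_pos hlam, real_inner_comm (wt - ws) g, mul_pow]
    ring
  have hgi : F wt - F ws ≤ ⟪g, wt - ws⟫ := grad_ineq hconv hdiff wt ws
  have h2l : (0:ℝ) < 2 * lam := by linarith
  have key : (F wt - F ws) * (2 * lam) ≤
      (‖wt - ws‖ ^ 2 - ‖wt1 - ws‖ ^ 2) + lam ^ 2 * ‖g‖ ^ 2 := by
    nlinarith [mul_le_mul_of_nonneg_right hgi h2l.le, hcontr, hexp]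
  have heq : (1 / (2 * lam)) * (‖wt - ws‖ ^ 2 - ‖wt1 - ws‖ ^ 2) + (lam / 2) * ‖g‖ ^ 2
      = ((‖wt - ws‖ ^ 2 - ‖wt1 - ws‖ ^ 2) + lam ^ 2 * ‖g‖ ^ 2) / (2 * lam) := by
    field_simp
  rw [heq, le_div_iff₀ h2l]
  exact key
end

section
/- Let F : ℝ^J → ℝ be convex and differentiable, A ⊆ ℝ^J closed and convex, λ > 0, t_n ∈ ℕ, w^{(0)} ∈ A, and w^{(t+1)} = Proj_A(w^{(t)} - λ·∇F(w^{(t)})) for t = 0, …, t_n - 1. Assume ‖∇F(w)‖ ≤ D for all w ∈ A. Then for every w* ∈ A: (1/t_n)·Σ_{t=0}^{t_n-1} (F(w^{(t)}) - F(w*)) ≤ ‖w^{(0)} - w*‖²/(2·λ·t_n) + (λ/2)·D². -/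
lemma my_grad_ineq {E : Type*} [NormedAddCommGroup E] [InnerProductSpace ℝ E] [CompleteSpace E]
    {F : E → ℝ} (hconv : ConvexOn ℝ Set.univ F) (hdiff : Differentiable ℝ F)
    (x y : E) : F x + (inner ℝ (gradient F x) (y - x) : ℝ) ≤ F y := by
  set v := y - x with hv
  have hgrad : HasGradientAt F (gradient F x) x := (hdiff x).hasGradientAt
  have hfd : HasFDerivAt F ((InnerProductSpace.toDual ℝ E) (gradient F x) : E →L[ℝ] ℝ) x :=
    hasGradientAt_iff_hasFDerivAt.mp hgrad
  have hline : HasDerivAt (fun s : ℝ => x + s • v) v 0 := by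
    simpa using ((hasDerivAt_id (0:ℝ)).smul_const v).const_add x
  have hφ : HasDerivAt (fun s : ℝ => F (x + s • v)) (inner ℝ (gradient F x) v : ℝ) 0 := by
    have hfd' : HasFDerivAt F ((InnerProductSpace.toDual ℝ E) (gradient F x) : E →L[ℝ] ℝ)
        ((fun s : ℝ => x + s • v) 0) := by simpa using hfd
    have h := hfd'.comp_hasDerivAt 0 hline
    rw [InnerProductSpace.toDual_apply_apply] at h
    exact h
  have hφc : ConvexOn ℝ Set.univ (fun s : ℝ => F (x + s • v)) := by
    have h2 := hconv.comp_affineMap (AffineMap.lineMap x y : ℝ →ᵃ[ℝ] E)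
    simp only [Set.preimage_univ] at h2
    suffices e : (fun s : ℝ => F (x + s • v)) = F ∘ (AffineMap.lineMap x y : ℝ →ᵃ[ℝ] E) by
      rw [e]; exact h2
    funext s
    simp only [Function.comp_apply, AffineMap.lineMap_apply_module]
    congr 1
    rw [hv]; module
  have hslope := hφc.le_slope_of_hasDerivAt (Set.mem_univ (0:ℝ)) (Set.mem_univ 1)
    one_pos hφ
  rw [slope_def_field] at hslope
  simp only [one_smul, zero_smul, add_zero, sub_zero, div_one] at hslope
  have : x + v = y := by rw [hv]; abel
  rw [this] at hslope
  linarith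

lemma my_proj_ineq {E : Type*} [NormedAddCommGroup E] [InnerProductSpace ℝ E]
    {A : Set E} (hAconv : Convex ℝ A)
    {proj : E → E} (hproj : ∀ x, proj x ∈ A ∧ ∀ z ∈ A, ‖x - proj x‖ ≤ ‖x - z‖)
    (x : E) {z : E} (hz : z ∈ A) : ‖proj x - z‖ ^ 2 ≤ ‖x - z‖ ^ 2 := by
  have hmem := (hproj x).1
  haveI : Nonempty A := ⟨⟨proj x, hmem⟩⟩
  have heq : ‖x - proj x‖ = ⨅ w : A, ‖x - (w : E)‖ := by
    refine le_antisymm (le_ciInf fun w => (hproj x).2 w w.2) ?_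
    exact ciInf_le ⟨0, fun b ⟨w, hw⟩ => hw ▸ norm_nonneg _⟩ (⟨proj x, hmem⟩ : A)
  have hinner : ∀ w ∈ A, (inner ℝ (x - proj x) (w - proj x) : ℝ) ≤ 0 :=
    (norm_eq_iInf_iff_real_inner_le_zero hAconv hmem).mp heq
  have h1 := hinner z hz
  have hexp : ‖x - z‖ ^ 2 =
      ‖x - proj x‖ ^ 2 + 2 * (inner ℝ (x - proj x) (proj x - z) : ℝ) + ‖proj x - z‖ ^ 2 := by
    have h3 : x - z = (x - proj x) + (proj x - z) := by abel
    rw [h3, norm_add_sq_real]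
  have h2 : (inner ℝ (x - proj x) (proj x - z) : ℝ) = - (inner ℝ (x - proj x) (z - proj x) : ℝ) := by
    rw [show proj x - z = -(z - proj x) from by abel, inner_neg_right]
  nlinarith [sq_nonneg ‖x - proj x‖]

/-- Averaged bound for projected gradient descent on a convex differentiable
function with uniformly bounded gradients. -/
theorem stmt_3 (J : ℕ) (F : EuclideanSpace ℝ (Fin J) → ℝ)
    (hconv : ConvexOn ℝ Set.univ F) (hdiff : Differentiable ℝ F)
    (A : Set (EuclideanSpace ℝ (Fin J))) (hAcl : IsClosed A) (hAconv : Convex ℝ A)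
    (hAne : A.Nonempty)
    (proj : EuclideanSpace ℝ (Fin J) → EuclideanSpace ℝ (Fin J))
    (hproj : ∀ x, proj x ∈ A ∧ ∀ z ∈ A, ‖x - proj x‖ ≤ ‖x - z‖)
    (lam : ℝ) (hlam : 0 < lam) (tn : ℕ) (htn : 0 < tn)
    (D : ℝ) (hD : ∀ w ∈ A, ‖gradient F w‖ ≤ D)
    (w : ℕ → EuclideanSpace ℝ (Fin J)) (hw0 : w 0 ∈ A)
    (hstep : ∀ t < tn, w (t + 1) = proj (w t - lam • gradient F (w t))) :
    ∀ ws ∈ A,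
      (1 / (tn : ℝ)) * ∑ t ∈ Finset.range tn, (F (w t) - F ws) ≤
        ‖w 0 - ws‖ ^ 2 / (2 * lam * tn) + (lam / 2) * D ^ 2 := by
  intro ws hws
  have hD0 : 0 ≤ D := by
    obtain ⟨a, ha⟩ := hAne
    exact (norm_nonneg _).trans (hD a ha)
  have h2lam : (0:ℝ) < 2 * lam := by linarith
  have hmem : ∀ t, t ≤ tn → w t ∈ A := by
    intro t
    induction t with
    | zero => exact fun _ => hw0
    | succ n _ =>
      intro hn
      rw [hstep n (by omega)]
      exact (hproj _).1
  have key : ∀ t < tn, F (w t) - F ws ≤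
      (‖w t - ws‖ ^ 2 - ‖w (t + 1) - ws‖ ^ 2) / (2 * lam) + (lam / 2) * D ^ 2 := by
    intro t ht
    have hwt : w t ∈ A := hmem t ht.le
    set gt := gradient F (w t) with hgt
    have hproj2 : ‖w (t + 1) - ws‖ ^ 2 ≤ ‖(w t - lam • gt) - ws‖ ^ 2 := by
      rw [hstep t ht]
      exact my_proj_ineq hAconv hproj _ hws
    have hexp : ‖(w t - lam • gt) - ws‖ ^ 2
        = ‖w t - ws‖ ^ 2 - 2 * lam * (inner ℝ gt (w t - ws) : ℝ) + lam ^ 2 * ‖gt‖ ^ 2 := by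
      have h3 : (w t - lam • gt) - ws = (w t - ws) - lam • gt := by abel
      rw [h3, norm_sub_sq_real, real_inner_smul_right, norm_smul, Real.norm_eq_abs,
        abs_of_pos hlam, real_inner_comm (w t - ws) gt]
      ring
    have hgrad := my_grad_ineq hconv hdiff (w t) ws
    have hflip : (inner ℝ gt (ws - w t) : ℝ) = - (inner ℝ gt (w t - ws) : ℝ) := by
      rw [show ws - w t = -(w t - ws) from by abel, inner_neg_right]
    have hG : ‖gt‖ ^ 2 ≤ D ^ 2 := pow_le_pow_left₀ (norm_nonneg _) (hD _ hwt) 2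
    have hfin : 2 * lam * (F (w t) - F ws) ≤
        (‖w t - ws‖ ^ 2 - ‖w (t + 1) - ws‖ ^ 2) + lam ^ 2 * D ^ 2 := by
      nlinarith [hproj2, hexp, hgrad, hflip, hG, sq_nonneg lam]
    have hle : F (w t) - F ws ≤
        ((‖w t - ws‖ ^ 2 - ‖w (t + 1) - ws‖ ^ 2) + lam ^ 2 * D ^ 2) / (2 * lam) :=
      (le_div_iff₀ h2lam).mpr (by linarith)
    have heqd : ((‖w t - ws‖ ^ 2 - ‖w (t + 1) - ws‖ ^ 2) + lam ^ 2 * D ^ 2) / (2 * lam)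
        = (‖w t - ws‖ ^ 2 - ‖w (t + 1) - ws‖ ^ 2) / (2 * lam) + (lam / 2) * D ^ 2 := by
      field_simp
    linarith [heqd ▸ hle]
  have hsum : ∑ t ∈ Finset.range tn, (F (w t) - F ws) ≤
      ‖w 0 - ws‖ ^ 2 / (2 * lam) + tn * ((lam / 2) * D ^ 2) := by
    have h1 : ∑ t ∈ Finset.range tn, (F (w t) - F ws) ≤
        ∑ t ∈ Finset.range tn,
          ((‖w t - ws‖ ^ 2 - ‖w (t + 1) - ws‖ ^ 2) / (2 * lam) + (lam / 2) * D ^ 2) :=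
      Finset.sum_le_sum fun t ht => key t (Finset.mem_range.mp ht)
    have h2 : ∑ t ∈ Finset.range tn,
          ((‖w t - ws‖ ^ 2 - ‖w (t + 1) - ws‖ ^ 2) / (2 * lam) + (lam / 2) * D ^ 2)
        = (‖w 0 - ws‖ ^ 2 - ‖w tn - ws‖ ^ 2) / (2 * lam) + tn * ((lam / 2) * D ^ 2) := by
      rw [Finset.sum_add_distrib, Finset.sum_const, Finset.card_range, nsmul_eq_mul,
        ← Finset.sum_div, Finset.sum_range_sub' (fun t => ‖w t - ws‖ ^ 2)]
    have h3 : (‖w 0 - ws‖ ^ 2 - ‖w tn - ws‖ ^ 2) / (2 * lam) ≤ ‖w 0 - ws‖ ^ 2 / (2 * lam) := by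
      gcongr
      nlinarith [sq_nonneg ‖w tn - ws‖]
    linarith [h1, h2 ▸ h1]
  have htnpos : (0:ℝ) < tn := by exact_mod_cast htn
  have hmul := mul_le_mul_of_nonneg_left hsum (by positivity : (0:ℝ) ≤ 1 / tn)
  have heq2 : (1 / (tn:ℝ)) * (‖w 0 - ws‖ ^ 2 / (2 * lam) + tn * ((lam / 2) * D ^ 2))
      = ‖w 0 - ws‖ ^ 2 / (2 * lam * tn) + (lam / 2) * D ^ 2 := by
    field_simp
  linarith [heq2 ▸ hmul]
end

section
/- Define on the index set I = {0,…,K-1}^d with grid points u_k (lower-left corners of cubes of sidelength δ = 2A/K in [-A,A]^d) the piecewise functions P_k recursively by P_0 = (Tf)_{q,u_0} and P_k = T(f - Σ_{l: u_l < u_k} P_l)_{q,u_k}, and set P(x) = Σ_{k ∈ I} P_k(x)·1_{[u_k,∞)}(x). Then for every r ∈ I and every x ∈ [u_r, u_r + δ·1), it holds that P(x) = (Tf)_{q,u_r}(x). -/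
/-- Partial derivative of `f` in direction `i`. -/
noncomputable def pderiv' {d : ℕ} (i : Fin d) (f : EuclideanSpace ℝ (Fin d) → ℝ) :
    EuclideanSpace ℝ (Fin d) → ℝ :=
  fun x => fderiv ℝ f x (EuclideanSpace.single i 1)

/-- Iterated partial derivative `∂^{j₁}_1 ⋯ ∂^{j_d}_d f` for a multi-index `j`. -/
noncomputable def mpderiv {d : ℕ} (j : Fin d → ℕ) (f : EuclideanSpace ℝ (Fin d) → ℝ) :
    EuclideanSpace ℝ (Fin d) → ℝ :=
  (List.finRange d).foldr (fun i g => (pderiv' i)^[j i] g) f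

/-- The multivariate Taylor polynomial of `f` of degree `q` around `u`. -/
noncomputable def taylorPoly (d q : ℕ) (f : EuclideanSpace ℝ (Fin d) → ℝ)
    (u x : EuclideanSpace ℝ (Fin d)) : ℝ :=
  ∑ j ∈ (Fintype.piFinset fun _ : Fin d => Finset.range (q + 1)).filter
      (fun j => ∑ i, j i ≤ q),
    (mpderiv j f u / ∏ i, (Nat.factorial (j i) : ℝ)) * ∏ i, (x i - u i) ^ j i

/-- The grid point (lower-left corner) `u_k = -A + k·(2A/K)` componentwise. -/
noncomputable def gridPt (d K : ℕ) (A : ℝ) (k : Fin d → ℕ) : EuclideanSpace ℝ (Fin d) :=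
  WithLp.toLp 2 (fun i => -A + (k i : ℝ) * (2 * A / K))

/-- The recursively defined piecewise Taylor pieces `P_k`. -/
noncomputable def Ppiece (d q K : ℕ) (A : ℝ) (f : EuclideanSpace ℝ (Fin d) → ℝ) :
    (Fin d → ℕ) → EuclideanSpace ℝ (Fin d) → ℝ :=
  fun k =>
    taylorPoly d q
      (fun x => f x -
        ∑ l ∈ ((Fintype.piFinset fun _ : Fin d => Finset.range K).filter
            (fun l => (∀ i, l i ≤ k i) ∧ l ≠ k)).attach,
          Ppiece d q K A f l.1 x)
      (gridPt d K A k)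
  termination_by k => ∑ i, k i
  decreasing_by
    have hl := l.2
    simp only [Finset.mem_filter] at hl
    obtain ⟨-, hle, hne⟩ := hl
    obtain ⟨i, hi⟩ := Function.ne_iff.mp hne
    exact Finset.sum_lt_sum (fun i _ => hle i)
      ⟨i, Finset.mem_univ i, lt_of_le_of_ne (hle i) hi⟩

variable {d : ℕ}
/-- monomial around v -/
noncomputable def mon (v : EuclideanSpace ℝ (Fin d)) (m : Fin d → ℕ) :
    EuclideanSpace ℝ (Fin d) → ℝ :=
  fun x => ∏ i, (x i - v i) ^ m i
lemma mon_contDiff (v : EuclideanSpace ℝ (Fin d)) (m : Fin d → ℕ) :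
    ContDiff ℝ (⊤ : ℕ∞) (mon v m) := by
  apply contDiff_prod
  intro i _
  exact (((EuclideanSpace.proj i : EuclideanSpace ℝ (Fin d) →L[ℝ] ℝ).contDiff).sub
    contDiff_const).pow _
lemma hasFDerivAt_mon (v : EuclideanSpace ℝ (Fin d)) (m : Fin d → ℕ)
    (x : EuclideanSpace ℝ (Fin d)) :
    HasFDerivAt (mon v m)
      (∑ i : Fin d, (∏ j ∈ Finset.univ.erase i, (x j - v j) ^ m j) •
        (((m i : ℝ) * (x i - v i) ^ (m i - 1)) • (EuclideanSpace.proj i : EuclideanSpace ℝ (Fin d) →L[ℝ] ℝ))) x := by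
  apply HasFDerivAt.finset_prod
  intro i _
  have h1 : HasFDerivAt (fun y : EuclideanSpace ℝ (Fin d) => y i - v i)
      (EuclideanSpace.proj i : EuclideanSpace ℝ (Fin d) →L[ℝ] ℝ) x := by
    simpa using ((EuclideanSpace.proj i : EuclideanSpace ℝ (Fin d) →L[ℝ] ℝ).hasFDerivAt (x := x)).sub_const (v i)
  exact (hasDerivAt_pow (m i) (x i - v i)).comp_hasFDerivAt x h1
lemma pderiv'_mon (v : EuclideanSpace ℝ (Fin d)) (m : Fin d → ℕ) (i : Fin d) :
    pderiv' i (mon v m) = fun x => (m i : ℝ) * mon v (Function.update m i (m i - 1)) x := by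
  funext x
  have h := hasFDerivAt_mon v m x
  rw [pderiv', h.fderiv]
  simp only [ContinuousLinearMap.coe_sum', Finset.sum_apply, ContinuousLinearMap.coe_smul',
    Pi.smul_apply, smul_eq_mul]
  rw [Finset.sum_eq_single i]
  · simp only [PiLp.proj_apply, EuclideanSpace.single_apply, if_pos rfl]
    rw [mon]
    rw [← Finset.prod_erase_mul (Finset.univ) _ (Finset.mem_univ i)]
    have : ∀ j ∈ Finset.univ.erase i, (x j - v j) ^ (Function.update m i (m i - 1) j) = (x j - v j) ^ m j := by
      intro j hj
      rw [Function.update_of_ne (Finset.mem_erase.mp hj).1]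
    rw [Finset.prod_congr rfl this, Function.update_self]
    simp only [if_true]; ring
  · intro b _ hb
    simp [EuclideanSpace.single_apply, if_neg hb]
  · simp
lemma pderiv'_const_mul (c : ℝ) (g : EuclideanSpace ℝ (Fin d) → ℝ) (hg : Differentiable ℝ g)
    (i : Fin d) : pderiv' i (fun x => c * g x) = fun x => c * pderiv' i g x := by
  funext x
  rw [pderiv', pderiv', fderiv_const_mul (hg.differentiableAt) c]
  simp
lemma pderiv'_iter_mon (v : EuclideanSpace ℝ (Fin d)) (m : Fin d → ℕ) (c : ℝ) (i : Fin d)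
    (t : ℕ) :
    (pderiv' i)^[t] (fun x => c * mon v m x) =
      fun x => (c * (Nat.descFactorial (m i) t : ℝ)) * mon v (Function.update m i (m i - t)) x := by
  induction t with
  | zero => simp [Function.update_eq_self]
  | succ t ih =>
    rw [Function.iterate_succ_apply', ih]
    have hd : Differentiable ℝ (mon v (Function.update m i (m i - t))) :=
      (mon_contDiff v _).differentiable (by simp)
    rw [pderiv'_const_mul _ _ hd, pderiv'_mon]
    funext x
    rw [Function.update_self, Function.update_idem, Nat.descFactorial_succ]
    have h : m i - t - 1 = m i - (t + 1) := by omega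
    rw [h]
    push_cast
    ring
lemma foldr_pderiv_mon (v : EuclideanSpace ℝ (Fin d)) (j : Fin d → ℕ) :
    ∀ (L : List (Fin d)), L.Nodup → ∀ (m : Fin d → ℕ) (c : ℝ),
    L.foldr (fun i g => (pderiv' i)^[j i] g) (fun x => c * mon v m x)
    = fun x => (c * ((L.map (fun i => (Nat.descFactorial (m i) (j i) : ℝ))).prod)) *
        mon v (fun i => if i ∈ L then m i - j i else m i) x := by
  intro L
  induction L with
  | nil =>
    intro _ m c
    simp only [List.foldr_nil, List.map_nil, List.prod_nil, mul_one, List.not_mem_nil, if_false]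
  | cons a L ih =>
    intro hnd m c
    have ha : a ∉ L := (List.nodup_cons.mp hnd).1
    rw [List.foldr_cons, ih (List.nodup_cons.mp hnd).2 m c, pderiv'_iter_mon]
    funext x
    have h1 : (fun i => if i ∈ L then m i - j i else m i) a = m a := by simp [ha]
    have h2 : Function.update (fun i => if i ∈ L then m i - j i else m i) a
        ((fun i => if i ∈ L then m i - j i else m i) a - j a)
        = fun i => if i ∈ a :: L then m i - j i else m i := by
      funext i
      by_cases hia : i = a
      · subst hia; simp [Function.update_self, ha]
      · simp [Function.update_of_ne hia, hia]
    rw [← h2]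
    simp only [h1, List.map_cons, List.prod_cons]
    ring
lemma mpderiv_mon (j : Fin d → ℕ) (v : EuclideanSpace ℝ (Fin d)) (m : Fin d → ℕ) :
    mpderiv j (mon v m) =
      fun x => (∏ i, (Nat.descFactorial (m i) (j i) : ℝ)) *
        mon v (fun i => m i - j i) x := by
  have h0 : mon v m = fun x => (1 : ℝ) * mon v m x := by funext x; rw [one_mul]
  rw [mpderiv, h0, foldr_pderiv_mon v j _ (List.nodup_finRange d) m 1]
  funext x
  have h1 : (fun i => if i ∈ List.finRange d then m i - j i else m i) = fun i => m i - j i := by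
    funext i; simp [List.mem_finRange]
  rw [h1, one_mul, ← Fin.prod_univ_def]
lemma taylor_mon (q : ℕ) (v : EuclideanSpace ℝ (Fin d)) (m : Fin d → ℕ)
    (hm : ∑ i, m i ≤ q) (u x : EuclideanSpace ℝ (Fin d)) :
    taylorPoly d q (mon v m) u x = mon v m x := by
  rw [taylorPoly]
  have hterm : ∀ j ∈ (Fintype.piFinset fun _ : Fin d => Finset.range (q + 1)).filter
      (fun j => ∑ i, j i ≤ q),
      (mpderiv j (mon v m) u / ∏ i, (Nat.factorial (j i) : ℝ)) * ∏ i, (x i - u i) ^ j i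
      = ∏ i, (((m i).choose (j i) : ℝ) * (u i - v i) ^ (m i - j i) * (x i - u i) ^ (j i)) := by
    intro j _
    rw [mpderiv_mon]
    simp only [mon]
    have hdesc : ∀ i : Fin d, (Nat.descFactorial (m i) (j i) : ℝ)
        = (Nat.factorial (j i) : ℝ) * ((m i).choose (j i) : ℝ) := by
      intro i; exact_mod_cast congrArg (Nat.cast : ℕ → ℝ) (Nat.descFactorial_eq_factorial_mul_choose (m i) (j i))
    rw [Finset.prod_congr rfl (fun i _ => hdesc i)]
    rw [Finset.prod_mul_distrib]
    have hfac : (∏ i, (Nat.factorial (j i) : ℝ)) ≠ 0 :=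
      Finset.prod_ne_zero_iff.mpr fun i _ => Nat.cast_ne_zero.mpr (Nat.factorial_ne_zero _)
    field_simp
    rw [Finset.prod_mul_distrib, Finset.prod_mul_distrib]
  rw [Finset.sum_congr rfl hterm]
  have hsub : Fintype.piFinset (fun i : Fin d => Finset.range (m i + 1)) ⊆
      (Fintype.piFinset fun _ : Fin d => Finset.range (q + 1)).filter (fun j => ∑ i, j i ≤ q) := by
    intro j hj
    rw [Fintype.mem_piFinset] at hj
    have hji : ∀ i, j i ≤ m i := fun i => Nat.lt_succ_iff.mp (Finset.mem_range.mp (hj i))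
    rw [Finset.mem_filter, Fintype.mem_piFinset]
    refine ⟨fun i => Finset.mem_range.mpr ?_, le_trans (Finset.sum_le_sum fun i _ => hji i) hm⟩
    have h1 : m i ≤ ∑ i', m i' := Finset.single_le_sum (fun i' _ => Nat.zero_le _) (Finset.mem_univ i)
    have h2 := hji i
    omega
  rw [← Finset.sum_subset hsub]
  · rw [← Finset.prod_univ_sum (fun i => Finset.range (m i + 1))
      (fun i k => ((m i).choose k : ℝ) * (u i - v i) ^ (m i - k) * (x i - u i) ^ k)]
    simp only [mon]
    congr 1
    funext i
    have := add_pow (x i - u i) (u i - v i) (m i)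
    have hx : x i - u i + (u i - v i) = x i - v i := by ring
    rw [hx] at this
    rw [this]
    apply Finset.sum_congr rfl
    intro k _
    ring
  · intro j hjf hjn
    rw [Fintype.mem_piFinset] at hjn
    push_neg at hjn
    obtain ⟨i, hi⟩ := hjn
    rw [Finset.mem_range, Nat.lt_succ_iff, not_le] at hi
    apply Finset.prod_eq_zero (Finset.mem_univ i)
    rw [Nat.choose_eq_zero_of_lt hi]
    simp
lemma pderiv'_contDiff {n : ℕ∞} {f : EuclideanSpace ℝ (Fin d) → ℝ}
    (hf : ContDiff ℝ (n + 1) f) (i : Fin d) : ContDiff ℝ n (pderiv' i f) :=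
  (hf.fderiv_right le_rfl).clm_apply contDiff_const
lemma pderiv'_sub {f g : EuclideanSpace ℝ (Fin d) → ℝ} (hf : Differentiable ℝ f)
    (hg : Differentiable ℝ g) (i : Fin d) :
    pderiv' i (fun x => f x - g x) = fun x => pderiv' i f x - pderiv' i g x := by
  funext x
  rw [pderiv', pderiv', pderiv', fderiv_fun_sub (hf.differentiableAt) (hg.differentiableAt)]
  simp
lemma pderiv'_add {f g : EuclideanSpace ℝ (Fin d) → ℝ} (hf : Differentiable ℝ f)
    (hg : Differentiable ℝ g) (i : Fin d) :
    pderiv' i (fun x => f x + g x) = fun x => pderiv' i f x + pderiv' i g x := by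
  funext x
  rw [pderiv', pderiv', pderiv', fderiv_fun_add (hf.differentiableAt) (hg.differentiableAt)]
  simp
lemma pderiv'_smul {f : EuclideanSpace ℝ (Fin d) → ℝ} (hf : Differentiable ℝ f) (c : ℝ)
    (i : Fin d) :
    pderiv' i (fun x => c * f x) = fun x => c * pderiv' i f x :=
  pderiv'_const_mul c f hf i
lemma pderiv'_zero (i : Fin d) :
    pderiv' i (fun _ : EuclideanSpace ℝ (Fin d) => (0 : ℝ)) = fun _ => (0 : ℝ) := by
  funext x
  rw [pderiv', fderiv_const_apply]
  simp
lemma hdtop : ((⊤ : ℕ∞) : WithTop ℕ∞) ≠ 0 := by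
  simp
lemma contDiff_top_succ {f : EuclideanSpace ℝ (Fin d) → ℝ} (hf : ContDiff ℝ (⊤ : ℕ∞) f) :
    ContDiff ℝ (((⊤ : ℕ∞) : WithTop ℕ∞) + 1) f := by
  have h : (((⊤ : ℕ∞) : WithTop ℕ∞) + 1) = ((⊤ : ℕ∞) : WithTop ℕ∞) := by
    have : ((⊤ : ℕ∞) + 1) = (⊤ : ℕ∞) := top_add 1
    exact_mod_cast congrArg (fun a : ℕ∞ => (a : WithTop ℕ∞)) this
  rw [h]; exact hf
lemma iter_contDiff_top {f : EuclideanSpace ℝ (Fin d) → ℝ} (hf : ContDiff ℝ (⊤ : ℕ∞) f)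
    (i : Fin d) (t : ℕ) : ContDiff ℝ (⊤ : ℕ∞) ((pderiv' i)^[t] f) := by
  induction t generalizing f with
  | zero => exact hf
  | succ t ih =>
    rw [Function.iterate_succ_apply]
    exact ih (pderiv'_contDiff (contDiff_top_succ hf) i)
lemma iter_contDiff {f : EuclideanSpace ℝ (Fin d) → ℝ} (i : Fin d) (t n : ℕ)
    (hf : ContDiff ℝ (n : ℕ∞) f) (h : t ≤ n) :
    ContDiff ℝ ((n - t : ℕ) : ℕ∞) ((pderiv' i)^[t] f) := by
  induction t generalizing f n with
  | zero => simpa using hf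
  | succ t ih =>
    rw [Function.iterate_succ_apply]
    have h1 : (((n - 1 : ℕ) : ℕ∞) : WithTop ℕ∞) + 1 = ((n : ℕ∞) : WithTop ℕ∞) := by
      have : (n - 1) + 1 = n := by omega
      exact_mod_cast congrArg (Nat.cast : ℕ → WithTop ℕ∞) this
    have h2 : ContDiff ℝ ((n - 1 : ℕ) : ℕ∞) (pderiv' i f) := by
      apply pderiv'_contDiff (n := ((n - 1 : ℕ) : ℕ∞)) _ i
      rw [h1]; exact hf
    have h3 := ih (n - 1) h2 (by omega)
    have h4 : ((n - 1 - t : ℕ) : ℕ∞) = ((n - (t + 1) : ℕ) : ℕ∞) := by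
      congr 1; omega
    rwa [h4] at h3
lemma iter_sub {f g : EuclideanSpace ℝ (Fin d) → ℝ} (i : Fin d) (t n : ℕ)
    (hf : ContDiff ℝ (n : ℕ∞) f) (hg : ContDiff ℝ (⊤ : ℕ∞) g) (h : t ≤ n) :
    (pderiv' i)^[t] (fun x => f x - g x)
      = fun x => (pderiv' i)^[t] f x - (pderiv' i)^[t] g x := by
  induction t generalizing f g n with
  | zero => simp
  | succ t ih =>
    rw [Function.iterate_succ_apply, Function.iterate_succ_apply,
      Function.iterate_succ_apply (pderiv' i) t g]
    have hfd : Differentiable ℝ f := hf.differentiable (by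
      exact_mod_cast (show n ≠ 0 by omega))
    rw [pderiv'_sub hfd (hg.differentiable hdtop) i]
    have h1 : (((n - 1 : ℕ) : ℕ∞) : WithTop ℕ∞) + 1 = ((n : ℕ∞) : WithTop ℕ∞) := by
      have : (n - 1) + 1 = n := by omega
      exact_mod_cast congrArg (Nat.cast : ℕ → WithTop ℕ∞) this
    have h2 : ContDiff ℝ ((n - 1 : ℕ) : ℕ∞) (pderiv' i f) := by
      apply pderiv'_contDiff (n := ((n - 1 : ℕ) : ℕ∞)) _ i
      rw [h1]; exact hf
    have h3 : ContDiff ℝ (⊤ : ℕ∞) (pderiv' i g) :=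
      pderiv'_contDiff (contDiff_top_succ hg) i
    exact ih (n - 1) h2 h3 (by omega)
lemma iter_add_top {f g : EuclideanSpace ℝ (Fin d) → ℝ} (i : Fin d) (t : ℕ)
    (hf : ContDiff ℝ (⊤ : ℕ∞) f) (hg : ContDiff ℝ (⊤ : ℕ∞) g) :
    (pderiv' i)^[t] (fun x => f x + g x)
      = fun x => (pderiv' i)^[t] f x + (pderiv' i)^[t] g x := by
  induction t generalizing f g with
  | zero => simp
  | succ t ih =>
    rw [Function.iterate_succ_apply, Function.iterate_succ_apply,
      Function.iterate_succ_apply (pderiv' i) t g]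
    rw [pderiv'_add (hf.differentiable hdtop) (hg.differentiable hdtop) i]
    exact ih (pderiv'_contDiff (contDiff_top_succ hf) i)
      (pderiv'_contDiff (contDiff_top_succ hg) i)
lemma iter_smul_top {f : EuclideanSpace ℝ (Fin d) → ℝ} (i : Fin d) (t : ℕ) (c : ℝ)
    (hf : ContDiff ℝ (⊤ : ℕ∞) f) :
    (pderiv' i)^[t] (fun x => c * f x) = fun x => c * (pderiv' i)^[t] f x := by
  induction t generalizing f with
  | zero => simp
  | succ t ih =>
    rw [Function.iterate_succ_apply, Function.iterate_succ_apply]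
    rw [pderiv'_smul (hf.differentiable hdtop) c i]
    exact ih (pderiv'_contDiff (contDiff_top_succ hf) i)
lemma iter_zero (i : Fin d) (t : ℕ) :
    (pderiv' i)^[t] (fun _ : EuclideanSpace ℝ (Fin d) => (0 : ℝ)) = fun _ => (0 : ℝ) := by
  induction t with
  | zero => rfl
  | succ t ih => rw [Function.iterate_succ_apply, pderiv'_zero, ih]
lemma foldr_contDiff (j : Fin d → ℕ) :
    ∀ (L : List (Fin d)) (n : ℕ) (f : EuclideanSpace ℝ (Fin d) → ℝ),
    ContDiff ℝ (n : ℕ∞) f → (L.map j).sum ≤ n →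
    ContDiff ℝ ((n - (L.map j).sum : ℕ) : ℕ∞) (L.foldr (fun i g => (pderiv' i)^[j i] g) f) := by
  intro L
  induction L with
  | nil => intro n f hf _; simpa using hf
  | cons a L ih =>
    intro n f hf h
    simp only [List.map_cons, List.sum_cons] at h ⊢
    rw [List.foldr_cons]
    have h1 := ih n f hf (by omega)
    have h2 := iter_contDiff a (j a) (n - (L.map j).sum) h1 (by omega)
    have h3 : n - (L.map j).sum - j a = n - (j a + (L.map j).sum) := by omega
    rwa [h3] at h2
lemma foldr_contDiff_top (j : Fin d → ℕ) :
    ∀ (L : List (Fin d)) (f : EuclideanSpace ℝ (Fin d) → ℝ),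
    ContDiff ℝ (⊤ : ℕ∞) f →
    ContDiff ℝ (⊤ : ℕ∞) (L.foldr (fun i g => (pderiv' i)^[j i] g) f) := by
  intro L
  induction L with
  | nil => intro f hf; simpa using hf
  | cons a L ih =>
    intro f hf
    rw [List.foldr_cons]
    exact iter_contDiff_top (ih f hf) a (j a)
lemma foldr_sub (j : Fin d → ℕ) :
    ∀ (L : List (Fin d)) (n : ℕ) (f g : EuclideanSpace ℝ (Fin d) → ℝ),
    ContDiff ℝ (n : ℕ∞) f → ContDiff ℝ (⊤ : ℕ∞) g → (L.map j).sum ≤ n →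
    L.foldr (fun i h => (pderiv' i)^[j i] h) (fun x => f x - g x)
      = fun x => L.foldr (fun i h => (pderiv' i)^[j i] h) f x
          - L.foldr (fun i h => (pderiv' i)^[j i] h) g x := by
  intro L
  induction L with
  | nil => intro n f g _ _ _; simp
  | cons a L ih =>
    intro n f g hf hg h
    simp only [List.map_cons, List.sum_cons] at h
    rw [List.foldr_cons, ih n f g hf hg (by omega), List.foldr_cons, List.foldr_cons]
    exact iter_sub a (j a) (n - (L.map j).sum)
      (foldr_contDiff j L n f hf (by omega)) (foldr_contDiff_top j L g hg) (by omega)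
lemma foldr_add_top (j : Fin d → ℕ) :
    ∀ (L : List (Fin d)) (f g : EuclideanSpace ℝ (Fin d) → ℝ),
    ContDiff ℝ (⊤ : ℕ∞) f → ContDiff ℝ (⊤ : ℕ∞) g →
    L.foldr (fun i h => (pderiv' i)^[j i] h) (fun x => f x + g x)
      = fun x => L.foldr (fun i h => (pderiv' i)^[j i] h) f x
          + L.foldr (fun i h => (pderiv' i)^[j i] h) g x := by
  intro L
  induction L with
  | nil => intro f g _ _; simp
  | cons a L ih =>
    intro f g hf hg
    rw [List.foldr_cons, ih f g hf hg, List.foldr_cons, List.foldr_cons]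
    exact iter_add_top a (j a) (foldr_contDiff_top j L f hf) (foldr_contDiff_top j L g hg)
lemma foldr_smul_top (j : Fin d → ℕ) :
    ∀ (L : List (Fin d)) (c : ℝ) (f : EuclideanSpace ℝ (Fin d) → ℝ),
    ContDiff ℝ (⊤ : ℕ∞) f →
    L.foldr (fun i h => (pderiv' i)^[j i] h) (fun x => c * f x)
      = fun x => c * L.foldr (fun i h => (pderiv' i)^[j i] h) f x := by
  intro L
  induction L with
  | nil => intro c f _; simp
  | cons a L ih =>
    intro c f hf
    rw [List.foldr_cons, ih c f hf, List.foldr_cons]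
    exact iter_smul_top a (j a) c (foldr_contDiff_top j L f hf)
lemma foldr_zero (j : Fin d → ℕ) (L : List (Fin d)) :
    L.foldr (fun i h => (pderiv' i)^[j i] h) (fun _ : EuclideanSpace ℝ (Fin d) => (0:ℝ))
      = fun _ => (0:ℝ) := by
  induction L with
  | nil => rfl
  | cons a L ih => rw [List.foldr_cons, ih, iter_zero]
lemma mpderiv_sub (n : ℕ) {f g : EuclideanSpace ℝ (Fin d) → ℝ}
    (hf : ContDiff ℝ (n : ℕ∞) f) (hg : ContDiff ℝ (⊤ : ℕ∞) g) (j : Fin d → ℕ)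
    (hj : ∑ i, j i ≤ n) :
    mpderiv j (fun x => f x - g x) = fun x => mpderiv j f x - mpderiv j g x := by
  have hs : ((List.finRange d).map j).sum = ∑ i, j i := (Fin.sum_univ_def j).symm
  exact foldr_sub j (List.finRange d) n f g hf hg (by rw [hs]; exact hj)
lemma mpderiv_add_top {f g : EuclideanSpace ℝ (Fin d) → ℝ}
    (hf : ContDiff ℝ (⊤ : ℕ∞) f) (hg : ContDiff ℝ (⊤ : ℕ∞) g) (j : Fin d → ℕ) :
    mpderiv j (fun x => f x + g x) = fun x => mpderiv j f x + mpderiv j g x :=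
  foldr_add_top j (List.finRange d) f g hf hg
lemma mpderiv_smul_top {f : EuclideanSpace ℝ (Fin d) → ℝ} (c : ℝ)
    (hf : ContDiff ℝ (⊤ : ℕ∞) f) (j : Fin d → ℕ) :
    mpderiv j (fun x => c * f x) = fun x => c * mpderiv j f x :=
  foldr_smul_top j (List.finRange d) c f hf
lemma mpderiv_zero (j : Fin d → ℕ) :
    mpderiv j (fun _ : EuclideanSpace ℝ (Fin d) => (0:ℝ)) = fun _ => (0:ℝ) :=
  foldr_zero j (List.finRange d)
lemma taylor_sub (q : ℕ) {f g : EuclideanSpace ℝ (Fin d) → ℝ}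
    (hf : ContDiff ℝ (q : ℕ∞) f) (hg : ContDiff ℝ (⊤ : ℕ∞) g)
    (u x : EuclideanSpace ℝ (Fin d)) :
    taylorPoly d q (fun y => f y - g y) u x
      = taylorPoly d q f u x - taylorPoly d q g u x := by
  rw [taylorPoly, taylorPoly, taylorPoly, ← Finset.sum_sub_distrib]
  apply Finset.sum_congr rfl
  intro j hj
  have hj' := (Finset.mem_filter.mp hj).2
  rw [mpderiv_sub q hf hg j hj']
  ring
lemma taylor_add_top (q : ℕ) {f g : EuclideanSpace ℝ (Fin d) → ℝ}
    (hf : ContDiff ℝ (⊤ : ℕ∞) f) (hg : ContDiff ℝ (⊤ : ℕ∞) g)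
    (u x : EuclideanSpace ℝ (Fin d)) :
    taylorPoly d q (fun y => f y + g y) u x
      = taylorPoly d q f u x + taylorPoly d q g u x := by
  rw [taylorPoly, taylorPoly, taylorPoly, ← Finset.sum_add_distrib]
  apply Finset.sum_congr rfl
  intro j _
  rw [mpderiv_add_top hf hg j]
  ring
lemma taylor_smul_top (q : ℕ) {f : EuclideanSpace ℝ (Fin d) → ℝ} (c : ℝ)
    (hf : ContDiff ℝ (⊤ : ℕ∞) f) (u x : EuclideanSpace ℝ (Fin d)) :
    taylorPoly d q (fun y => c * f y) u x = c * taylorPoly d q f u x := by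
  rw [taylorPoly, taylorPoly, Finset.mul_sum]
  apply Finset.sum_congr rfl
  intro j _
  rw [mpderiv_smul_top c hf j]
  ring
lemma taylor_zero (q : ℕ) (u x : EuclideanSpace ℝ (Fin d)) :
    taylorPoly d q (fun _ => (0:ℝ)) u x = 0 := by
  rw [taylorPoly]
  apply Finset.sum_eq_zero
  intro j _
  rw [mpderiv_zero j]
  simp
/-- The submodule of polynomials of total degree ≤ q. -/
def PolyQ (d q : ℕ) : Submodule ℝ (EuclideanSpace ℝ (Fin d) → ℝ) :=
  Submodule.span ℝ {g | ∃ v m, (∑ i, m i ≤ q) ∧ g = mon v m}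
lemma polyQ_prop (q : ℕ) (g : EuclideanSpace ℝ (Fin d) → ℝ) (hg : g ∈ PolyQ d q) :
    ContDiff ℝ (⊤ : ℕ∞) g ∧ ∀ u x, taylorPoly d q g u x = g x := by
  induction hg using Submodule.span_induction with
  | mem g hgm =>
    obtain ⟨v, m, hm, rfl⟩ := hgm
    exact ⟨mon_contDiff v m, fun u x => taylor_mon q v m hm u x⟩
  | zero =>
    refine ⟨contDiff_const, fun u x => ?_⟩
    have h0 : ((0 : EuclideanSpace ℝ (Fin d) → ℝ)) = fun _ => (0:ℝ) := rfl
    rw [h0, taylor_zero]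
  | add g h hgs hhs ihg ihh =>
    refine ⟨ihg.1.add ihh.1, fun u x => ?_⟩
    have he : (g + h) = fun y => g y + h y := rfl
    rw [he, taylor_add_top q ihg.1 ihh.1, ihg.2 u x, ihh.2 u x]
  | smul c g hgs ihg =>
    refine ⟨ihg.1.const_smul c, fun u x => ?_⟩
    have he : (c • g) = fun y => c * g y := rfl
    rw [he, taylor_smul_top q c ihg.1, ihg.2 u x]
lemma taylor_mem_polyQ (q : ℕ) (F : EuclideanSpace ℝ (Fin d) → ℝ)
    (u : EuclideanSpace ℝ (Fin d)) :
    taylorPoly d q F u ∈ PolyQ d q := by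
  have he : taylorPoly d q F u
      = ∑ j ∈ (Fintype.piFinset fun _ : Fin d => Finset.range (q + 1)).filter
          (fun j => ∑ i, j i ≤ q),
        (mpderiv j F u / ∏ i, (Nat.factorial (j i) : ℝ)) • mon u j := by
    funext x
    rw [taylorPoly]
    rw [Finset.sum_apply]
    apply Finset.sum_congr rfl
    intro j _
    simp [mon]
  rw [he]
  apply Submodule.sum_mem
  intro j hj
  exact Submodule.smul_mem _ _ (Submodule.subset_span
    ⟨u, j, (Finset.mem_filter.mp hj).2, rfl⟩)
lemma Ppiece_mem (d q K : ℕ) (A : ℝ) (f : EuclideanSpace ℝ (Fin d) → ℝ) (k : Fin d → ℕ) :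
    Ppiece d q K A f k ∈ PolyQ d q := by
  rw [Ppiece]
  exact taylor_mem_polyQ q _ _

/-- On the cube `[u_r, u_r + δ·1)` the piecewise Taylor polynomial `P` equals
the Taylor polynomial of `f` around `u_r`. -/
theorem stmt_10 (d q K : ℕ) (hK : 0 < K) (A : ℝ) (hA : 1 ≤ A)
    (f : EuclideanSpace ℝ (Fin d) → ℝ) (hf : ContDiff ℝ q f)
    (r : Fin d → ℕ) (hr : ∀ i, r i < K)
    (x : EuclideanSpace ℝ (Fin d))
    (hx : ∀ i, gridPt d K A r i ≤ x i ∧ x i < gridPt d K A r i + 2 * A / K) :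
    ∑ k ∈ Fintype.piFinset (fun _ : Fin d => Finset.range K),
        (if ∀ j, gridPt d K A k j ≤ x j then Ppiece d q K A f k x else 0)
      = taylorPoly d q f (gridPt d K A r) x := by
  have hδ : 0 < 2 * A / K := by
    apply div_pos (by linarith) (by exact_mod_cast hK)
  -- indicator condition ↔ componentwise ≤
  have hiff : ∀ k : Fin d → ℕ,
      (∀ j, gridPt d K A k j ≤ x j) ↔ (∀ i, k i ≤ r i) := by
    intro k
    constructor
    · intro h i
      have h1 := h i
      have h2 := (hx i).2
      rw [gridPt] at h1 h2
      have h3 : (k i : ℝ) * (2 * A / K) < ((r i : ℝ) + 1) * (2 * A / K) := by nlinarith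
      have h4 : (k i : ℝ) < (r i : ℝ) + 1 := lt_of_mul_lt_mul_right (by linarith) (le_of_lt hδ)
      have h5 : (k i : ℝ) < ((r i + 1 : ℕ) : ℝ) := by push_cast; linarith
      have : k i < r i + 1 := by exact_mod_cast h5
      omega
    · intro h j
      have h1 : gridPt d K A k j ≤ gridPt d K A r j := by
        rw [gridPt, gridPt]
        have : (k j : ℝ) ≤ (r j : ℝ) := Nat.cast_le.mpr (h j)
        nlinarith
      exact le_trans h1 (hx j).1
  rw [Finset.sum_congr rfl (fun k _ => if_congr (hiff k) rfl rfl)]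
  rw [← Finset.sum_filter]
  set T := Fintype.piFinset (fun _ : Fin d => Finset.range K) with hT
  set S := T.filter (fun l => (∀ i, l i ≤ r i) ∧ l ≠ r) with hS
  have hrT : r ∈ T.filter (fun k => ∀ i, k i ≤ r i) := by
    rw [Finset.mem_filter, hT, Fintype.mem_piFinset]
    exact ⟨fun i => Finset.mem_range.mpr (hr i), fun i => le_refl _⟩
  rw [← Finset.add_sum_erase _ _ hrT]
  have hSe : (T.filter (fun k => ∀ i, k i ≤ r i)).erase r = S := by
    ext l
    rw [Finset.mem_erase, Finset.mem_filter, hS, Finset.mem_filter]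
    tauto
  rw [hSe]
  -- the accumulated polynomial G
  set G : EuclideanSpace ℝ (Fin d) → ℝ := fun y => ∑ l ∈ S, Ppiece d q K A f l y with hG
  have hGmem : G ∈ PolyQ d q := by
    have : G = ∑ l ∈ S, Ppiece d q K A f l := by
      funext y; rw [hG]; rw [Finset.sum_apply]
    rw [this]
    exact Submodule.sum_mem _ (fun l _ => Ppiece_mem d q K A f l)
  obtain ⟨hGtop, hGtaylor⟩ := polyQ_prop q G hGmem
  -- unfold Ppiece at r
  have hPr : Ppiece d q K A f r x = taylorPoly d q (fun y => f y - G y) (gridPt d K A r) x := by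
    rw [Ppiece]
    congr 1
    funext y
    rw [hG]
    congr 1
    exact Finset.sum_attach S (fun l => Ppiece d q K A f l y)
  rw [hPr, taylor_sub q hf hGtop, hGtaylor, hG]
  ring
end

section
/- Let σ : ℝ → ℝ be N-times continuously differentiable with ‖σ^{(N)}‖_∞ < ∞, let k < N, and let t_σ ∈ ℝ with σ^{(k)}(t_σ) ≠ 0. Then there exist α_0, …, α_{N-1}, β_0, …, β_{N-1} ∈ ℝ such that f(x) = (k!/σ^{(k)}(t_σ))·Σ_{j=0}^{N-1} α_j·σ(β_j·x + t_σ) satisfies |f(x) - x^k| ≤ c·A^N for all A > 0 and all x ∈ [-A,A], where c depends on N, k, σ^{(k)}(t_σ), ‖σ^{(N)}‖_∞ and the chosen α_j, β_j but not on A. -/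
open Set Finset

private lemma iterWithin_eq {n : ℕ} {f : ℝ → ℝ} (hf : ContDiff ℝ n f) {m : ℕ}
    (hm : m ≤ n) {s : Set ℝ} (hs : UniqueDiffOn ℝ s) {x : ℝ} (hx : x ∈ s) :
    iteratedDerivWithin m f s x = iteratedDeriv m f x := by
  have h : HasFTaylorSeriesUpTo (n : ℕ∞) f (ftaylorSeries ℝ f) :=
    contDiff_iff_ftaylorSeries.mp hf
  have h' : HasFTaylorSeriesUpToOn (n : ℕ∞) f (ftaylorSeries ℝ f) s :=
    (hasFTaylorSeriesUpToOn_univ_iff.mpr h).mono (subset_univ s)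
  have e1 := h'.eq_iteratedFDerivWithin_of_uniqueDiffOn (by exact_mod_cast hm) hs hx
  have e2 := h.eq_iteratedFDeriv (by exact_mod_cast hm) x
  rw [iteratedDerivWithin_eq_iteratedFDerivWithin, iteratedDeriv_eq_iteratedFDeriv,
    ← e1, e2]

private lemma taylor_bd (n : ℕ) {σ : ℝ → ℝ} (hσ : ContDiff ℝ (n + 1 : ℕ) σ)
    {M : ℝ} (hM : ∀ x, |iteratedDeriv (n + 1) σ x| ≤ M) (t y : ℝ) :
    |σ (t + y) - ∑ i ∈ Finset.range (n + 1), (i.factorial : ℝ)⁻¹ * y ^ i * iteratedDeriv i σ t|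
      ≤ M / n.factorial * |y| ^ (n + 1) := by
  have hM0 : 0 ≤ M := (abs_nonneg _).trans (hM t)
  rcases lt_trichotomy y 0 with hy | hy | hy
  · -- negative case: reflect
    set g : ℝ → ℝ := fun z => σ (2 * t - z) with hgdef
    have hgeq : g = fun z => (fun w => σ (w + 2 * t)) (-z) := by
      funext z; simp only [g]; ring_nf
    have hgd : ∀ (m : ℕ) (z : ℝ),
        iteratedDeriv m g z = (-1 : ℝ) ^ m * iteratedDeriv m σ (2 * t - z) := by
      intro m z
      rw [hgeq, iteratedDeriv_comp_neg m (fun w => σ (w + 2 * t)) z,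
        iteratedDeriv_comp_add_const m σ (2 * t)]
      rw [smul_eq_mul]; ring_nf
    have hg : ContDiff ℝ (n + 1 : ℕ) g :=
      hσ.comp ((contDiff_const (c := 2 * t)).sub contDiff_id)
    have hab : t ≤ t - y := by linarith
    have hlt : t < t - y := by linarith
    have hud : UniqueDiffOn ℝ (Icc t (t - y)) := uniqueDiffOn_Icc hlt
    have hC : ∀ z ∈ Icc t (t - y),
        ‖iteratedDerivWithin (n + 1) g (Icc t (t - y)) z‖ ≤ M := by
      intro z hz
      rw [Real.norm_eq_abs, iterWithin_eq hg le_rfl hud hz, hgd, abs_mul, abs_pow,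
        abs_neg, abs_one, one_pow, one_mul]
      exact hM _
    have key := taylor_mean_remainder_bound hab (hg.contDiffOn) (right_mem_Icc.mpr hab) hC
    have hTe : taylorWithinEval g n (Icc t (t - y)) t (t - y)
        = ∑ i ∈ Finset.range (n + 1),
            (i.factorial : ℝ)⁻¹ * y ^ i * iteratedDeriv i σ t := by
      rw [taylor_within_apply]
      refine Finset.sum_congr rfl fun i hi => ?_
      have hin : i ≤ n + 1 := (Finset.mem_range.mp hi).le
      rw [iterWithin_eq hg hin hud (left_mem_Icc.mpr hab), hgd, smul_eq_mul]
      have : (2 : ℝ) * t - t = t := by ring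
      rw [this]
      have : t - y - t = -y := by ring
      rw [this]
      rw [neg_pow]
      ring_nf
      simp [mul_comm i 2, pow_mul]
    have hgx : g (t - y) = σ (t + y) := by simp only [g]; ring_nf
    rw [hgx, hTe, Real.norm_eq_abs] at key
    have : t - y - t = -y := by ring
    rw [this] at key
    have habs : |y| = -y := abs_of_neg hy
    calc |σ (t + y) - ∑ i ∈ Finset.range (n + 1),
            (i.factorial : ℝ)⁻¹ * y ^ i * iteratedDeriv i σ t|
        ≤ M * (-y) ^ (n + 1) / n.factorial := key
      _ = M / n.factorial * |y| ^ (n + 1) := by rw [habs]; ring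
  · -- y = 0
    subst hy
    have hsum : ∑ i ∈ Finset.range (n + 1),
        (i.factorial : ℝ)⁻¹ * (0 : ℝ) ^ i * iteratedDeriv i σ t = σ t := by
      rw [Finset.sum_eq_single 0]
      · simp [iteratedDeriv_zero]
      · intro i _ hi0
        simp [zero_pow hi0]
      · simp
    simp [hsum]
  · -- positive case
    have hab : t ≤ t + y := by linarith
    have hlt : t < t + y := by linarith
    have hud : UniqueDiffOn ℝ (Icc t (t + y)) := uniqueDiffOn_Icc hlt
    have hC : ∀ z ∈ Icc t (t + y),
        ‖iteratedDerivWithin (n + 1) σ (Icc t (t + y)) z‖ ≤ M := by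
      intro z hz
      rw [Real.norm_eq_abs, iterWithin_eq hσ le_rfl hud hz]
      exact hM _
    have key := taylor_mean_remainder_bound hab (hσ.contDiffOn) (right_mem_Icc.mpr hab) hC
    have hTe : taylorWithinEval σ n (Icc t (t + y)) t (t + y)
        = ∑ i ∈ Finset.range (n + 1),
            (i.factorial : ℝ)⁻¹ * y ^ i * iteratedDeriv i σ t := by
      rw [taylor_within_apply]
      refine Finset.sum_congr rfl fun i hi => ?_
      have hin : i ≤ n + 1 := (Finset.mem_range.mp hi).le
      rw [iterWithin_eq hσ hin hud (left_mem_Icc.mpr hab), smul_eq_mul]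
      have : t + y - t = y := by ring
      rw [this]
    rw [hTe, Real.norm_eq_abs] at key
    have : t + y - t = y := by ring
    rw [this] at key
    have habs : |y| = y := abs_of_pos hy
    calc |σ (t + y) - ∑ i ∈ Finset.range (n + 1),
            (i.factorial : ℝ)⁻¹ * y ^ i * iteratedDeriv i σ t|
        ≤ M * y ^ (n + 1) / n.factorial := key
      _ = M / n.factorial * |y| ^ (n + 1) := by rw [habs]; ring

/-- A one-hidden-layer network with smooth activation approximating `x^k`. -/
theorem stmt_14 (N k : ℕ) (hk : k < N) (σ : ℝ → ℝ) (hσ : ContDiff ℝ N σ)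
    (M : ℝ) (hM : ∀ x, |iteratedDeriv N σ x| ≤ M)
    (t : ℝ) (ht : iteratedDeriv k σ t ≠ 0) :
    ∃ α β : Fin N → ℝ, ∃ c : ℝ, 0 ≤ c ∧
      ∀ A : ℝ, 0 < A → ∀ x ∈ Set.Icc (-A) A,
        |(Nat.factorial k : ℝ) / iteratedDeriv k σ t * ∑ j, α j * σ (β j * x + t)
          - x ^ k| ≤ c * A ^ N := by
  obtain ⟨n, rfl⟩ : ∃ n, N = n + 1 := ⟨N - 1, (Nat.succ_pred_eq_of_pos (Nat.pos_of_ne_zero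
    (by rintro rfl; exact Nat.not_lt_zero k hk))).symm⟩
  set d : ℕ → ℝ := fun i => iteratedDeriv i σ t with hd
  have hM0 : 0 ≤ M := (abs_nonneg _).trans (hM t)
  set β : Fin (n + 1) → ℝ := fun j => (j : ℝ) + 1 with hβ
  have hβinj : Function.Injective β := by
    intro a b hab
    have : (a : ℝ) = (b : ℝ) := by simpa [hβ] using hab
    exact_mod_cast Fin.ext (by exact_mod_cast this)
  set V : Matrix (Fin (n + 1)) (Fin (n + 1)) ℝ := (Matrix.vandermonde β).transpose with hV
  have hVdet : V.det ≠ 0 := by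
    rw [hV, Matrix.det_transpose, Matrix.det_vandermonde_ne_zero_iff]
    exact hβinj
  set k' : Fin (n + 1) := ⟨k, hk⟩ with hk'
  set α : Fin (n + 1) → ℝ := V⁻¹.mulVec (Pi.single k' 1) with hα
  have hmul : V.mulVec α = Pi.single k' 1 := by
    rw [hα, Matrix.mulVec_mulVec, Matrix.mul_nonsing_inv V hVdet.isUnit, Matrix.one_mulVec]
  have hδ : ∀ i < n + 1, ∑ j, β j ^ i * α j = if i = k then 1 else 0 := by
    intro i hi
    have := congrFun hmul ⟨i, hi⟩
    simp only [Matrix.mulVec, dotProduct, hV, Matrix.transpose_apply,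
      Matrix.vandermonde, Matrix.of_apply, Pi.single_apply] at this
    rw [this]
    simp [hk', Fin.mk.injEq]
  refine ⟨α, β, |(k.factorial : ℝ) / d k| * (M / n.factorial) *
    ∑ j, |α j| * |β j| ^ (n + 1), by positivity, ?_⟩
  intro A hA x hx
  have hxA : |x| ≤ A := abs_le.mpr ⟨hx.1, hx.2⟩
  set T : Fin (n + 1) → ℝ := fun j => ∑ i ∈ Finset.range (n + 1),
    (i.factorial : ℝ)⁻¹ * (β j * x) ^ i * d i with hT
  have hswap : ∑ j, α j * T j = (k.factorial : ℝ)⁻¹ * x ^ k * d k := by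
    simp only [hT, Finset.mul_sum]
    rw [Finset.sum_comm]
    have hterm : ∀ i ∈ Finset.range (n + 1),
        ∑ j, α j * ((i.factorial : ℝ)⁻¹ * (β j * x) ^ i * d i)
          = (i.factorial : ℝ)⁻¹ * x ^ i * d i * ∑ j, β j ^ i * α j := by
      intro i _
      rw [Finset.mul_sum]
      exact Finset.sum_congr rfl fun j _ => by rw [mul_pow]; ring
    rw [Finset.sum_congr rfl hterm]
    have : ∀ i ∈ Finset.range (n + 1),
        (i.factorial : ℝ)⁻¹ * x ^ i * d i * ∑ j, β j ^ i * α j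
          = if i = k then (i.factorial : ℝ)⁻¹ * x ^ i * d i else 0 := by
      intro i hi
      rw [hδ i (Finset.mem_range.mp hi)]
      split <;> simp
    rw [Finset.sum_congr rfl this, Finset.sum_ite_eq' (Finset.range (n + 1)) k
      (fun i => (i.factorial : ℝ)⁻¹ * x ^ i * d i), if_pos (Finset.mem_range.mpr hk)]
  have hsum : ∑ j, α j * σ (β j * x + t)
      = (k.factorial : ℝ)⁻¹ * x ^ k * d k
        + ∑ j, α j * (σ (t + β j * x) - T j) := by
    rw [← hswap, ← Finset.sum_add_distrib]
    refine Finset.sum_congr rfl fun j _ => ?_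
    rw [add_comm (β j * x) t]
    ring
  have hfac : (k.factorial : ℝ) ≠ 0 := Nat.cast_ne_zero.mpr k.factorial_ne_zero
  have e0 : (k.factorial : ℝ) / d k * ((k.factorial : ℝ)⁻¹ * x ^ k * d k) = x ^ k := by
    field_simp
    rw [mul_comm (d k)]
    exact mul_div_cancel_right₀ _ (show d k ≠ 0 from ht)
  rw [hsum, mul_add, e0, add_sub_cancel_left]
  have hRj : ∀ j, |σ (t + β j * x) - T j| ≤ M / n.factorial * |β j * x| ^ (n + 1) :=
    fun j => taylor_bd n hσ hM t (β j * x)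
  calc |(k.factorial : ℝ) / d k * ∑ j, α j * (σ (t + β j * x) - T j)|
      = |(k.factorial : ℝ) / d k| * |∑ j, α j * (σ (t + β j * x) - T j)| := abs_mul _ _
    _ ≤ |(k.factorial : ℝ) / d k| * ∑ j, |α j| * (M / n.factorial * |β j * x| ^ (n + 1)) := by
        refine mul_le_mul_of_nonneg_left ?_ (abs_nonneg _)
        refine (Finset.abs_sum_le_sum_abs _ _).trans ?_
        refine Finset.sum_le_sum fun j _ => ?_
        rw [abs_mul]
        exact mul_le_mul_of_nonneg_left (hRj j) (abs_nonneg _)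
    _ ≤ |(k.factorial : ℝ) / d k| * ∑ j, |α j| * (M / n.factorial * (|β j| * A) ^ (n + 1)) := by
        gcongr with j _
        rw [abs_mul]
        exact mul_le_mul_of_nonneg_left hxA (abs_nonneg _)
    _ = |(k.factorial : ℝ) / d k| * (M / n.factorial)
          * (∑ j, |α j| * |β j| ^ (n + 1)) * A ^ (n + 1) := by
        rw [mul_assoc, mul_assoc]
        congr 1
        calc ∑ j, |α j| * (M / n.factorial * (|β j| * A) ^ (n + 1))
            = ∑ j, M / n.factorial * (|α j| * |β j| ^ (n + 1) * A ^ (n + 1)) :=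
              Finset.sum_congr rfl fun j _ => by rw [mul_pow]; ring
          _ = M / n.factorial * ((∑ j, |α j| * |β j| ^ (n + 1)) * A ^ (n + 1)) := by
              rw [← Finset.mul_sum, ← Finset.sum_mul]
end

section
/- Define recursively f_2(z_1,z_2) = g(z_1,z_2) and f_{2^q}(z_1,…,z_{2^q}) = g(f_{2^{q-1}}(z_1,…,z_{2^{q-1}}), f_{2^{q-1}}(z_{2^{q-1}+1},…,z_{2^q})), where g approximates multiplication with |g(x,y) - x·y| ≤ η for x, y ∈ [-4^{2^{q-1}}A, 4^{2^{q-1}}A] and all intermediate values f_{2^l} lie in [-4^{2^l}A, 4^{2^l}A] for inputs in [-A,A]. Let Δ_l = sup_{z ∈ [-A,A]^{2^l}} |f_{2^l}(z) - Π_{i=1}^{2^l} z_i|. Then Δ_q ≤ η + 2·4^{2^{q-1}}·Δ_{q-1}. -/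
/-- Binary tree of approximate multiplications: `treeMult g l` multiplies `2^l` numbers. -/
noncomputable def treeMult (g : ℝ → ℝ → ℝ) : (l : ℕ) → (Fin (2 ^ l) → ℝ) → ℝ
  | 0, z => z ⟨0, by positivity⟩
  | l + 1, z =>
      g (treeMult g l fun i => z ⟨i.1, by
          have h2 : (2 : ℕ) ^ (l + 1) = 2 ^ l + 2 ^ l := by ring
          have := i.2; omega⟩)
        (treeMult g l fun i => z ⟨2 ^ l + i.1, by
          have h2 : (2 : ℕ) ^ (l + 1) = 2 ^ l + 2 ^ l := by ring
          have := i.2; omega⟩)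

/-- Error recursion `Δ_q ≤ η + 2·4^{2^{q-1}}·Δ_{q-1}` for the binary tree of
approximate multiplications (stated with `q = m + 1`). -/
theorem stmt_17 (g : ℝ → ℝ → ℝ) (m : ℕ) (A η Δ : ℝ)
    (hA0 : 0 < A) (hA1 : A ≤ 1) (hη : 0 ≤ η) (hΔ : 0 ≤ Δ)
    (hg : ∀ x y : ℝ, |x| ≤ 4 ^ (2 ^ m) * A → |y| ≤ 4 ^ (2 ^ m) * A →
      |g x y - x * y| ≤ η)
    (hrange : ∀ z : Fin (2 ^ m) → ℝ, (∀ i, |z i| ≤ A) →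
      |treeMult g m z| ≤ 4 ^ (2 ^ m) * A)
    (hprev : ∀ z : Fin (2 ^ m) → ℝ, (∀ i, |z i| ≤ A) →
      |treeMult g m z - ∏ i, z i| ≤ Δ) :
    ∀ z : Fin (2 ^ (m + 1)) → ℝ, (∀ i, |z i| ≤ A) →
      |treeMult g (m + 1) z - ∏ i, z i| ≤ η + 2 * 4 ^ (2 ^ m) * Δ := by
  intro z hz
  have h2 : (2 : ℕ) ^ (m + 1) = 2 ^ m + 2 ^ m := by ring
  set zL : Fin (2 ^ m) → ℝ := fun i => z ⟨i.1, by omega⟩ with hzL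
  set zR : Fin (2 ^ m) → ℝ := fun i => z ⟨2 ^ m + i.1, by omega⟩ with hzR
  have hzLb : ∀ i, |zL i| ≤ A := fun i => hz _
  have hzRb : ∀ i, |zR i| ≤ A := fun i => hz _
  set L := treeMult g m zL with hL
  set R := treeMult g m zR with hR
  have htree : treeMult g (m + 1) z = g L R := rfl
  -- product splits
  have hprod : ∏ i, z i = (∏ i, zL i) * (∏ i, zR i) := by
    rw [← Fin.prod_congr' z h2.symm, Fin.prod_univ_add]
    rfl
  have hone : (1:ℝ) ≤ 4 ^ (2 ^ m) := one_le_pow₀ (by norm_num)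
  have hAb : A ≤ 4 ^ (2 ^ m) * A := le_mul_of_one_le_left hA0.le hone
  have hPL : |∏ i, zL i| ≤ 1 := by
    rw [Finset.abs_prod]
    calc ∏ i, |zL i| ≤ ∏ _i : Fin (2^m), (1:ℝ) := by
          exact Finset.prod_le_prod (fun i _ => abs_nonneg _)
            (fun i _ => (hzLb i).trans hA1)
      _ = 1 := by simp
  have hPR : |∏ i, zR i| ≤ 1 := by
    rw [Finset.abs_prod]
    calc ∏ i, |zR i| ≤ ∏ _i : Fin (2^m), (1:ℝ) := by
          exact Finset.prod_le_prod (fun i _ => abs_nonneg _)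
            (fun i _ => (hzRb i).trans hA1)
      _ = 1 := by simp
  have hLb : |L| ≤ 4 ^ (2 ^ m) * A := hrange zL hzLb
  have hRb : |R| ≤ 4 ^ (2 ^ m) * A := hrange zR hzRb
  have hLd : |L - ∏ i, zL i| ≤ Δ := hprev zL hzLb
  have hRd : |R - ∏ i, zR i| ≤ Δ := hprev zR hzRb
  have hgb : |g L R - L * R| ≤ η := hg L R hLb hRb
  have key : |L * R - (∏ i, zL i) * (∏ i, zR i)| ≤ 2 * 4 ^ (2 ^ m) * Δ := by
    have : L * R - (∏ i, zL i) * (∏ i, zR i)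
        = L * (R - ∏ i, zR i) + (L - ∏ i, zL i) * (∏ i, zR i) := by ring
    rw [this]
    calc |L * (R - ∏ i, zR i) + (L - ∏ i, zL i) * (∏ i, zR i)|
        ≤ |L * (R - ∏ i, zR i)| + |(L - ∏ i, zL i) * (∏ i, zR i)| := abs_add_le _ _
      _ = |L| * |R - ∏ i, zR i| + |L - ∏ i, zL i| * |∏ i, zR i| := by
          rw [abs_mul, abs_mul]
      _ ≤ 4 ^ (2 ^ m) * Δ + Δ * 4 ^ (2 ^ m) := by
          have hL1 : |L| ≤ 4 ^ (2 ^ m) := by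
            calc |L| ≤ 4 ^ (2 ^ m) * A := hLb
              _ ≤ 4 ^ (2 ^ m) * 1 := by gcongr
              _ = 4 ^ (2 ^ m) := mul_one _
          exact add_le_add
            (mul_le_mul hL1 hRd (abs_nonneg _) (by positivity))
            (mul_le_mul hLd (hPR.trans hone) (abs_nonneg _) hΔ)
      _ = 2 * 4 ^ (2 ^ m) * Δ := by ring
  calc |treeMult g (m + 1) z - ∏ i, z i|
      = |(g L R - L * R) + (L * R - (∏ i, zL i) * (∏ i, zR i))| := by
        rw [htree, hprod]; ring_nf
    _ ≤ |g L R - L * R| + |L * R - (∏ i, zL i) * (∏ i, zR i)| := abs_add_le _ _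
    _ ≤ η + 2 * 4 ^ (2 ^ m) * Δ := add_le_add hgb key
end
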